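/- arXiv:2301.09680 — 2 statements merged into one kernel-verified Lean document; each statement's English description precedes it below -/
import Mathlib

section
/- If a real random variable X satisfies E[|X|^{1+v}] ≤ u for some v ∈ (0,1] and u > 0, then for any B > 0, E[X² · 1_{|X| ≤ B}] ≤ u · B^{1-v}. -/
open MeasureTheory Real

theorem statement_1 {Ω : Type*} [MeasurableSpace Ω] (μ : Measure Ω) [IsProbabilityMeasure μ]
    (X : Ω → ℝ) (hX : Measurable X) (v u : ℝ) (hv : v ∈ Set.Ioc (0 : ℝ) 1) (hu : 0 < u)
    (hint : Integrable (fun ω => |X ω| ^ (1 + v)) μ)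
    (hmom : ∫ ω, |X ω| ^ (1 + v) ∂μ ≤ u)
    (B : ℝ) (hB : 0 < B) :
    ∫ ω, Set.indicator {ω | |X ω| ≤ B} (fun ω => X ω ^ 2) ω ∂μ ≤ u * B ^ (1 - v) := by
  obtain ⟨hv0, hv1⟩ := hv
  have h1v : (0:ℝ) ≤ 1 - v := by linarith
  have key : ∫ ω, Set.indicator {ω | |X ω| ≤ B} (fun ω => X ω ^ 2) ω ∂μ ≤
      ∫ ω, |X ω| ^ (1 + v) * B ^ (1 - v) ∂μ := by
    apply integral_mono_of_nonneg
    · filter_upwards with ω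
      apply Set.indicator_nonneg
      intro x _
      positivity
    · exact hint.mul_const _
    · filter_upwards with ω
      by_cases hω : ω ∈ {ω | |X ω| ≤ B}
      · rw [Set.indicator_of_mem hω]
        have habs : |X ω| ≤ B := hω
        have : X ω ^ 2 = |X ω| ^ (1 + v) * |X ω| ^ (1 - v) := by
          rw [← Real.rpow_add_of_nonneg (abs_nonneg _) (by linarith) h1v]
          rw [show (1 + v) + (1 - v) = (2:ℝ) by ring]
          rw [show ((2:ℝ)) = ((2:ℕ):ℝ) by norm_num, Real.rpow_natCast, sq_abs]
        rw [this]
        exact mul_le_mul_of_nonneg_left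
          (Real.rpow_le_rpow (abs_nonneg _) habs h1v)
          (Real.rpow_nonneg (abs_nonneg _) _)
      · rw [Set.indicator_of_notMem hω]
        positivity
  calc _ ≤ ∫ ω, |X ω| ^ (1 + v) * B ^ (1 - v) ∂μ := key
    _ = (∫ ω, |X ω| ^ (1 + v) ∂μ) * B ^ (1 - v) := integral_mul_const _ _
    _ ≤ u * B ^ (1 - v) := by
        exact mul_le_mul_of_nonneg_right hmom (Real.rpow_nonneg hB.le _)
end

section
/- Let V_0 = λI_d with λ > 0, and suppose V_m is positive definite with det(V_m) = 2^m λ^d and tr(V_m) ≤ dλ + ∑_{k=1}^m L²/ε_k² for some L > 0 and ε_k > 0. Then ∑_{k=1}^m 1/ε_k² ≥ (dλ/L²)(2^{m/d} − 1). -/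
/-! The AM–GM inequality on the eigenvalues of `V` gives `d · det(V)^{1/d} ≤ tr V`. With
`det V = 2^m λ^d` the left side is `d λ 2^{m/d}`, and comparing with the assumed upper bound
on the trace gives the claim. -/

theorem Matrix.PosSemidef.card_mul_det_rpow_le_trace {n : Type*} [Fintype n] [DecidableEq n]
    {A : Matrix n n ℝ} (hA : A.PosSemidef) :
    Fintype.card n * A.det ^ (Fintype.card n : ℝ)⁻¹ ≤ A.trace := by
  rcases isEmpty_or_nonempty n with hn | hn
  · simp
  have hcard : (0 : ℝ) < Fintype.card n := by exact_mod_cast Fintype.card_pos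
  have amgm := Real.geom_mean_le_arith_mean Finset.univ (fun _ ↦ 1) hA.1.eigenvalues
    (fun _ _ ↦ zero_le_one) (by simpa using hcard) (fun i _ ↦ hA.eigenvalues_nonneg i)
  simp only [Real.rpow_one, Finset.sum_const, Finset.card_univ, nsmul_eq_mul, mul_one,
    one_mul] at amgm
  rw [hA.1.det_eq_prod_eigenvalues, hA.1.trace_eq_sum_eigenvalues]
  simpa [mul_comm, ← le_div_iff₀' hcard] using amgm

theorem Real.pow_mul_pow_rpow_inv {a b : ℝ} (ha : 0 ≤ a) (hb : 0 ≤ b) (m : ℕ) {d : ℕ}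
    (hd : d ≠ 0) : (a ^ m * b ^ d) ^ (d : ℝ)⁻¹ = a ^ ((m : ℝ) / d) * b := by
  rw [Real.mul_rpow (by positivity) (by positivity), ← Real.rpow_natCast a m,
    ← Real.rpow_mul ha, Real.pow_rpow_inv_natCast hb hd, div_eq_mul_inv]

theorem statement_15_general (d m : ℕ) (hd : 1 ≤ d) (lam L : ℝ) (hlam : 0 < lam) (hL : 0 < L)
    (V : Matrix (Fin d) (Fin d) ℝ) (hV : V.PosDef)
    (ε : ℕ → ℝ)
    (hdet : V.det = 2 ^ m * lam ^ d)
    (htr : V.trace ≤ d * lam + ∑ k ∈ Finset.range m, L ^ 2 / ε k ^ 2) :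
    ∑ k ∈ Finset.range m, 1 / ε k ^ 2 ≥
      (d * lam / L ^ 2) * ((2 : ℝ) ^ ((m : ℝ) / d) - 1) := by
  have amgm := hV.posSemidef.card_mul_det_rpow_le_trace
  rw [Fintype.card_fin, hdet,
    Real.pow_mul_pow_rpow_inv zero_le_two hlam.le m (by omega)] at amgm
  have hsum : ∑ k ∈ Finset.range m, L ^ 2 / ε k ^ 2 =
      L ^ 2 * ∑ k ∈ Finset.range m, 1 / ε k ^ 2 := by
    rw [Finset.mul_sum]
    exact Finset.sum_congr rfl fun k _ ↦ mul_one_div _ _ |>.symm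
  rw [ge_iff_le, div_mul_eq_mul_div, div_le_iff₀ (by positivity)]
  linarith

theorem statement_15 (d m : ℕ) (hd : 1 ≤ d) (lam L : ℝ) (hlam : 0 < lam) (hL : 0 < L)
    (V : Matrix (Fin d) (Fin d) ℝ) (hV : V.PosDef)
    (ε : ℕ → ℝ) (hε : ∀ k, 0 < ε k)
    (hdet : V.det = 2 ^ m * lam ^ d)
    (htr : V.trace ≤ d * lam + ∑ k ∈ Finset.range m, L ^ 2 / ε k ^ 2) :
    ∑ k ∈ Finset.range m, 1 / ε k ^ 2 ≥
      (d * lam / L ^ 2) * ((2 : ℝ) ^ ((m : ℝ) / d) - 1) :=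
  statement_15_general d m hd lam L hlam hL V hV ε hdet htr
end
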